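/- Let (V,μ) be a simple, strongly connected, finite weighted directed graph with Ricci curvature κ ≥ K > 0 and sup_x 𝒟_x ≤ Λ for some Λ ≥ 1 (where 𝒟_x = sup_{y ∈ 𝒩_x} max{d(x,y), d(y,x)}). Then for every probability density ρ with respect to the Perron measure 𝔪, W(𝔪, ρ𝔪) ≤ (Λ/(2K)) Σ_{x,y} |ρ(y) − ρ(x)| 𝔪_{xy}. -/

import Mathlib

/-!
By Kantorovich duality it suffices to bound `∑ f (ρ m - m)` uniformly over `1`-Lipschitz `f`;
let `A` be the supremum of this dual objective. The lazy step `f ↦ f - ε ℒ f` turns a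
`1`-Lipschitz function into a `(1 - ε K)`-Lipschitz one (the curvature bound, applied to a bump
function of gradient `1` along the pair in question), and since `ℒ` is symmetric in `L²(m)` it
changes the dual objective by `ε/2 ∑ (f x - f y)(ρ x - ρ y) 𝔪_{xy} ≤ ε Λ T / 2`, where
`T = ∑ |ρ y - ρ x| 𝔪_{xy}`. Hence `A ≤ (1 - ε K) A + ε Λ T / 2`, that is `A ≤ Λ T / (2 K)`; this
is a discrete-time version of integrating the gradient estimate for `P_t` over `t ∈ [0, ∞)`.
-/

open Finset

namespace Chung

variable {V : Type*}

/-- There is a directed path of length `n` from `x` to `y` (edges are pairs of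
positive weight). -/
def PathLen (μ : V → V → ℝ) (n : ℕ) (x y : V) : Prop :=
  ∃ p : ℕ → V, p 0 = x ∧ p n = y ∧ ∀ i < n, 0 < μ (p i) (p (i + 1))

/-- The (non-symmetric) graph distance: the minimal length of a directed path. -/
noncomputable def gdist (μ : V → V → ℝ) (x y : V) : ℝ :=
  (sInf {n : ℕ | PathLen μ n x y} : ℕ)

/-- `(V,μ)` is a simple, strongly connected weighted directed graph. -/
def IsGraph (μ : V → V → ℝ) : Prop :=
  (∀ x y, 0 ≤ μ x y) ∧ (∀ x, μ x x = 0) ∧ (∀ x y, ∃ n, PathLen μ n x y)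

variable [Fintype V]

/-- The transition probability kernel `P(x,y) = μ_{xy}/μ(x)`. -/
noncomputable def ker (μ : V → V → ℝ) (x y : V) : ℝ := μ x y / ∑ z, μ x z

/-- `m` is the Perron (stationary probability) measure of the kernel `P`. -/
def IsPerron (μ : V → V → ℝ) (m : V → ℝ) : Prop :=
  (∀ x, 0 < m x) ∧ (∑ x, m x = 1) ∧ ∀ y, m y = ∑ x, m x * ker μ x y

/-- The mean transition probability kernel `𝒫 = (P + ←P)/2`,
where `←P(x,y) = m(y)P(y,x)/m(x)`. -/
noncomputable def meanKer (μ : V → V → ℝ) (m : V → ℝ) (x y : V) : ℝ :=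
  (ker μ x y + m y * ker μ y x / m x) / 2

variable [DecidableEq V]

/-- The Chung Laplacian `ℒ = I − 𝒫` as a matrix. -/
noncomputable def lapMat (μ : V → V → ℝ) (m : V → ℝ) : Matrix V V ℝ :=
  1 - Matrix.of (meanKer μ m)

/-- The Chung Laplacian applied to a function. -/
noncomputable def lap (μ : V → V → ℝ) (m : V → ℝ) (f : V → ℝ) : V → ℝ :=
  (lapMat μ m).mulVec f

/-- The heat semigroup `P_t = e^{−tℒ}` as a matrix. -/
noncomputable def heatMat (μ : V → V → ℝ) (m : V → ℝ) (t : ℝ) : Matrix V V ℝ :=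
  NormedSpace.exp ((-t) • lapMat μ m)

/-- `P_t f`. -/
noncomputable def heatSG (μ : V → V → ℝ) (m : V → ℝ) (t : ℝ) (f : V → ℝ) : V → ℝ :=
  (heatMat μ m t).mulVec f

/-- The heat kernel measure `p_x^t(y) = m(y)·(P_t δ_x)(y)/m(x)`. -/
noncomputable def heatKer (μ : V → V → ℝ) (m : V → ℝ) (t : ℝ) (x y : V) : ℝ :=
  m y * heatSG μ m t (fun z => if z = x then 1 else 0) y / m x

/-- `π` is a coupling of the probability measures `ν₀` and `ν₁`. -/
def IsCoupling (π : V → V → ℝ) (ν₀ ν₁ : V → ℝ) : Prop :=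
  (∀ x y, 0 ≤ π x y) ∧ (∀ x, ∑ y, π x y = ν₀ x) ∧ (∀ y, ∑ x, π x y = ν₁ y)

/-- Wasserstein distance for the (possibly non-symmetric) cost `d`. -/
noncomputable def wass (d : V → V → ℝ) (ν₀ ν₁ : V → ℝ) : ℝ :=
  sInf {r : ℝ | ∃ π : V → V → ℝ, IsCoupling π ν₀ ν₁ ∧ r = ∑ x, ∑ y, d x y * π x y}

/-- Lipschitz constant with respect to the (non-symmetric) distance `d`. -/
noncomputable def lipConst (d : V → V → ℝ) (f : V → ℝ) : ℝ :=
  sSup {r : ℝ | ∃ x y, x ≠ y ∧ r = (f y - f x) / d x y}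

/-- The Lin–Lu–Yau type Ricci curvature of the directed graph, via the limit-free
formula `κ(x,y) = inf {∇_{xy} ℒf : f 1-Lipschitz, ∇_{xy} f = 1}`. -/
noncomputable def ricci (μ : V → V → ℝ) (m : V → ℝ) (x y : V) : ℝ :=
  sInf {r : ℝ | ∃ f : V → ℝ, (∀ a b, f b - f a ≤ gdist μ a b) ∧
    (f y - f x) / gdist μ x y = 1 ∧
    r = (lap μ m f y - lap μ m f x) / gdist μ x y}

lemma le_div_of_forall_exists_le_mul_add {α : Type*} {s : Set α} {S : α → ℝ} (hs : s.Nonempty)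
    (hbdd : BddAbove (S '' s)) {c b : ℝ} (hc0 : 0 ≤ c) (hc1 : c < 1)
    (h : ∀ g ∈ s, ∃ g' ∈ s, S g ≤ c * S g' + b) {f : α} (hf : f ∈ s) :
    S f ≤ b / (1 - c) := by
  have hsup : sSup (S '' s) ≤ c * sSup (S '' s) + b := by
    refine csSup_le (hs.image S) ?_
    rintro _ ⟨g, hg, rfl⟩
    obtain ⟨g', hg', hle⟩ := h g hg
    exact hle.trans (by gcongr; exact le_csSup hbdd ⟨g', hg', rfl⟩)
  rw [le_div_iff₀ (sub_pos.2 hc1)]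
  nlinarith [le_csSup hbdd ⟨f, hf, rfl⟩]

section Distance

variable {V : Type*} {μ : V → V → ℝ}

lemma pathLen_zero_iff {x y : V} : PathLen μ 0 x y ↔ x = y :=
  ⟨fun ⟨_, h0, hn, _⟩ => h0.symm.trans hn, fun h => ⟨fun _ => y, h ▸ rfl, rfl, by simp⟩⟩

lemma PathLen.append {n k : ℕ} {x y z : V} (h₁ : PathLen μ n x y) (h₂ : PathLen μ k y z) :
    PathLen μ (n + k) x z := by
  obtain ⟨p, hp0, hpn, hp⟩ := h₁
  obtain ⟨q, hq0, hqk, hq⟩ := h₂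
  refine ⟨fun i => if i ≤ n then p i else q (i - n), by simp [hp0], ?_, fun i hi => ?_⟩
  · rcases k.eq_zero_or_pos with rfl | hk
    · simp [hpn, ← hq0, hqk]
    · simp [show ¬ n + k ≤ n by omega, hqk]
  · rcases lt_or_ge i n with hin | hin
    · by_cases hi1 : i + 1 = n
      · simpa [hin.le, hi1, hpn] using hp i hin
      · simpa [hin.le, show i + 1 ≤ n by omega] using hp i hin
    · rcases hin.eq_or_lt with rfl | hin
      · simpa [hpn, ← hq0, Nat.add_sub_cancel_left] using hq 0 (by omega)
      · simpa [show ¬ i ≤ n by omega, show ¬ i + 1 ≤ n by omega,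
          show i + 1 - n = i - n + 1 by omega] using hq (i - n) (by omega)

lemma gdist_nonneg (x y : V) : 0 ≤ gdist μ x y := Nat.cast_nonneg _

lemma gdist_self (x : V) : gdist μ x x = 0 := by
  simp [gdist, Nat.sInf_eq_zero, pathLen_zero_iff]

lemma pathLen_gdist (hG : IsGraph μ) (x y : V) : PathLen μ (sInf {n | PathLen μ n x y}) x y :=
  Nat.sInf_mem (hG.2.2 x y)

lemma gdist_triangle (hG : IsGraph μ) (x y z : V) : gdist μ x z ≤ gdist μ x y + gdist μ y z := by
  unfold gdist
  exact_mod_cast Nat.sInf_le ((pathLen_gdist hG x y).append (pathLen_gdist hG y z))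

lemma gdist_pos (hG : IsGraph μ) {x y : V} (hxy : x ≠ y) : 0 < gdist μ x y := by
  have h := pathLen_gdist hG x y
  unfold gdist
  refine Nat.cast_pos.2 (Nat.pos_of_ne_zero fun h0 => hxy ?_)
  rw [h0] at h
  exact pathLen_zero_iff.1 h

end Distance

section QuasiMetric

variable {V : Type*} {d : V → V → ℝ}

lemma exists_lipschitz_bump (hd0 : ∀ x, d x x = 0) (htri : ∀ x y z, d x z ≤ d x y + d y z)
    {f : V → ℝ} (hf : ∀ a b, f b - f a ≤ d a b) (x y : V) :
    ∃ h : V → ℝ, (∀ a b, h b - h a ≤ d a b) ∧ h x = f x ∧ h y = f x + d x y ∧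
      ∀ z, 0 ≤ h z - f z ∧ h z - f z ≤ d x y - (f y - f x) := by
  refine ⟨fun z => max (f z) (f x + d x y - d z y), fun a b => ?_, by simp, ?_, fun z => ?_⟩
  · have := le_max_left (f a) (f x + d x y - d a y)
    have := le_max_right (f a) (f x + d x y - d a y)
    have := hf a b
    have := htri a b y
    rw [sub_le_iff_le_add]
    exact max_le (by linarith) (by linarith)
  · simp only [hd0, sub_zero]
    exact max_eq_right (by linarith [hf x y])
  · refine ⟨by linarith [le_max_left (f z) (f x + d x y - d z y)], ?_⟩
    rw [sub_le_iff_le_add]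
    exact max_le (by linarith [hf x y]) (by linarith [hf z y])

end QuasiMetric

section Transport

variable {V : Type*} [Fintype V]

lemma wass_le_cost {d π : V → V → ℝ} {ν₀ ν₁ : V → ℝ} (hd : ∀ x y, 0 ≤ d x y)
    (hπ : IsCoupling π ν₀ ν₁) : wass d ν₀ ν₁ ≤ ∑ x, ∑ y, d x y * π x y := by
  refine csInf_le ⟨0, ?_⟩ ⟨π, hπ, rfl⟩
  rintro r ⟨π', hπ', rfl⟩
  exact Finset.sum_nonneg fun x _ => Finset.sum_nonneg fun y _ => mul_nonneg (hd x y) (hπ'.1 x y)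

lemma isCoupling_mul {ν₀ ν₁ : V → ℝ} (h0 : ∀ x, 0 ≤ ν₀ x) (h1 : ∀ x, 0 ≤ ν₁ x)
    (hs0 : ∑ x, ν₀ x = 1) (hs1 : ∑ x, ν₁ x = 1) :
    IsCoupling (fun x y => ν₀ x * ν₁ y) ν₀ ν₁ :=
  ⟨fun x y => mul_nonneg (h0 x) (h1 y), fun x => by rw [← Finset.mul_sum, hs1, mul_one],
    fun y => by rw [← Finset.sum_mul, hs0, one_mul]⟩

lemma sum_mul_sub_sum_mul_le_cost {d π : V → V → ℝ} {ν₀ ν₁ f : V → ℝ}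
    (hπ : IsCoupling π ν₀ ν₁) (hf : ∀ a b, f b - f a ≤ d a b) :
    ∑ y, f y * ν₁ y - ∑ x, f x * ν₀ x ≤ ∑ x, ∑ y, d x y * π x y := by
  have hsplit : ∑ y, f y * ν₁ y - ∑ x, f x * ν₀ x = ∑ x, ∑ y, (f y - f x) * π x y := by
    simp only [← hπ.2.1, ← hπ.2.2, Finset.mul_sum, sub_mul, Finset.sum_sub_distrib]
    rw [Finset.sum_comm]
  rw [hsplit]
  exact Finset.sum_le_sum fun x _ => Finset.sum_le_sum fun y _ =>
    mul_le_mul_of_nonneg_right (hf x y) (hπ.1 x y)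

/-- The `d`-transform `y ↦ ⨅ x, φ x + d x y`. -/
lemma exists_lipschitz_between [Nonempty V] {d : V → V → ℝ} (hd0 : ∀ x, d x x = 0)
    (htri : ∀ x y z, d x z ≤ d x y + d y z) {φ ψ : V → ℝ} (h : ∀ x y, ψ y - φ x ≤ d x y) :
    ∃ f : V → ℝ, (∀ a b, f b - f a ≤ d a b) ∧ (∀ x, f x ≤ φ x) ∧ ∀ y, ψ y ≤ f y := by
  have hbdd : ∀ y, BddBelow (Set.range fun x => φ x + d x y) := fun y =>
    Finite.bddBelow_range _
  refine ⟨fun y => ⨅ x, φ x + d x y, fun a b => ?_, fun x => ?_, fun y => ?_⟩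
  · rw [sub_le_comm]
    refine le_ciInf fun x => ?_
    linarith [ciInf_le (hbdd b) x, htri x a b]
  · simpa [hd0] using ciInf_le (hbdd x) x
  · exact le_ciInf fun x => by linarith [h x y]

def marginalsCost (d : V → V → ℝ) : (V × V → ℝ) →ₗ[ℝ] (V → ℝ) × (V → ℝ) × ℝ where
  toFun π := (fun x => ∑ y, π (x, y), fun y => ∑ x, π (x, y), ∑ x, ∑ y, d x y * π (x, y))
  map_add' π π' := by simp [Finset.sum_add_distrib, mul_add, Prod.ext_iff, funext_iff]
  map_smul' c π := by simp [Finset.mul_sum, Prod.ext_iff, funext_iff, mul_left_comm]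

lemma marginalsCost_apply (d : V → V → ℝ) (π : V × V → ℝ) :
    marginalsCost d π
      = (fun x => ∑ y, π (x, y), fun y => ∑ x, π (x, y), ∑ x, ∑ y, d x y * π (x, y)) :=
  rfl

lemma linearMap_apply_prod [DecidableEq V] (ℓ : (V → ℝ) × (V → ℝ) × ℝ →ₗ[ℝ] ℝ)
    (u v : V → ℝ) (r : ℝ) :
    ℓ (u, v, r) = ∑ x, u x * ℓ (Pi.single x 1, 0, 0) + ∑ y, v y * ℓ (0, Pi.single y 1, 0)
      + r * ℓ (0, 0, 1) := by
  have : (u, v, r) = ∑ x, u x • ((Pi.single x 1, 0, 0) : (V → ℝ) × (V → ℝ) × ℝ)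
      + ∑ y, v y • ((0, Pi.single y 1, 0) : (V → ℝ) × (V → ℝ) × ℝ) + r • (0, 0, 1) := by
    ext <;> simp [Prod.fst_sum, Prod.snd_sum, Finset.sum_apply, Pi.single_apply]
  simp only [this, map_add, map_sum, map_smul, smul_eq_mul]

/-- Proved by separating `(ν₀, ν₁, B)` from the compact convex set of marginals and costs of
all transport plans. -/
lemma exists_potentials_of_lt_wass [DecidableEq V] {d : V → V → ℝ} (hd : ∀ x y, 0 ≤ d x y)
    {ν₀ ν₁ : V → ℝ} (h0 : ∀ x, 0 ≤ ν₀ x) (h1 : ∀ x, 0 ≤ ν₁ x) (hs0 : ∑ x, ν₀ x = 1)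
    (hs1 : ∑ x, ν₁ x = 1) {B : ℝ} (hBW : B < wass d ν₀ ν₁) :
    ∃ φ ψ : V → ℝ, (∀ x y, ψ y - φ x ≤ d x y) ∧ B < ∑ y, ψ y * ν₁ y - ∑ x, φ x * ν₀ x := by
  have hnot : (ν₀, ν₁, B) ∉ marginalsCost d '' stdSimplex ℝ (V × V) := by
    rintro ⟨π, hπ, hπB⟩
    simp only [marginalsCost_apply, Prod.mk.injEq, funext_iff] at hπB
    have hc : IsCoupling (fun x y => π (x, y)) ν₀ ν₁ :=
      ⟨fun x y => hπ.1 (x, y), hπB.1, hπB.2.1⟩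
    linarith [wass_le_cost hd hc, hπB.2.2]
  obtain ⟨ℓ, u, hℓp, hℓS⟩ := geometric_hahn_banach_point_closed
    ((convex_stdSimplex ℝ _).linear_image _)
    ((isCompact_stdSimplex ℝ (V × V)).image
      (marginalsCost d).continuous_of_finiteDimensional).isClosed hnot
  set a : V → ℝ := fun x => ℓ (Pi.single x 1, 0, 0)
  set b : V → ℝ := fun y => ℓ (0, Pi.single y 1, 0)
  set c : ℝ := ℓ (0, 0, 1)
  have hℓ : ∀ w, ℓ w = ∑ x, w.1 x * a x + ∑ y, w.2.1 y * b y + w.2.2 * c := fun w =>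
    linearMap_apply_prod ℓ.toLinearMap w.1 w.2.1 w.2.2
  have hpair : ∀ x y, u < a x + b y + c * d x y := fun x y => by
    have := hℓS _ ⟨_, single_mem_stdSimplex ℝ (x, y), rfl⟩
    simpa [hℓ, marginalsCost_apply, Pi.single_apply, Prod.ext_iff, ite_and, mul_comm] using this
  set cost := ∑ x, ∑ y, d x y * (ν₀ x * ν₁ y)
  have hprod : u < ℓ (ν₀, ν₁, cost) := by
    refine hℓS _ ⟨fun p => ν₀ p.1 * ν₁ p.2, ⟨fun p => mul_nonneg (h0 _) (h1 _), ?_⟩, ?_⟩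
    · rw [Fintype.sum_prod_type, ← Finset.sum_mul_sum, hs0, hs1, one_mul]
    · simp [marginalsCost_apply, ← Finset.mul_sum, ← Finset.sum_mul, hs0, hs1, cost]
  rw [hℓ] at hprod hℓp
  have hc : 0 < c := by
    have hcost : B < cost := hBW.trans_le (wass_le_cost hd (isCoupling_mul h0 h1 hs0 hs1))
    nlinarith
  refine ⟨fun x => a x / c, fun y => (u - b y) / c, fun x y => ?_, ?_⟩
  · rw [← sub_div, div_le_iff₀ hc]
    linarith [hpair x y]
  · have hsum : ∑ y, (u - b y) / c * ν₁ y - ∑ x, a x / c * ν₀ x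
        = (u - ∑ x, ν₀ x * a x - ∑ y, ν₁ y * b y) / c := by
      simp only [div_mul_eq_mul_div, ← Finset.sum_div, sub_mul, Finset.sum_sub_distrib,
        ← Finset.mul_sum, hs1, mul_comm (a _), mul_comm (b _)]
      ring
    rw [hsum, lt_div_iff₀ hc]
    linarith

/-- Kantorovich duality, the nontrivial inequality. -/
theorem wass_le_of_forall_lipschitz [DecidableEq V] {d : V → V → ℝ} (hd : ∀ x y, 0 ≤ d x y)
    (hd0 : ∀ x, d x x = 0) (htri : ∀ x y z, d x z ≤ d x y + d y z) {ν₀ ν₁ : V → ℝ}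
    (h0 : ∀ x, 0 ≤ ν₀ x) (h1 : ∀ x, 0 ≤ ν₁ x) (hs0 : ∑ x, ν₀ x = 1) (hs1 : ∑ x, ν₁ x = 1)
    {B : ℝ} (hB : ∀ f : V → ℝ, (∀ a b, f b - f a ≤ d a b) →
      ∑ y, f y * ν₁ y - ∑ x, f x * ν₀ x ≤ B) :
    wass d ν₀ ν₁ ≤ B := by
  by_contra! hBW
  obtain ⟨φ, ψ, hφψ, hgap⟩ := exists_potentials_of_lt_wass hd h0 h1 hs0 hs1 hBW
  have : Nonempty V := by
    by_contra! hV
    simp at hs0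
  obtain ⟨f, hf, hfφ, hψf⟩ := exists_lipschitz_between hd0 htri hφψ
  have : ∑ y, ψ y * ν₁ y - ∑ x, φ x * ν₀ x ≤ ∑ y, f y * ν₁ y - ∑ x, f x * ν₀ x := by
    gcongr with y _ x _
    · exact h1 y
    · exact hψf y
    · exact h0 x
    · exact hfφ x
  linarith [hB f hf]

end Transport

section Kernel

variable {V : Type*} [Fintype V] {μ : V → V → ℝ} {m : V → ℝ}

lemma sum_pos_of_isPerron (hG : IsGraph μ) (hP : IsPerron μ m) (x : V) : 0 < ∑ z, μ x z := by
  refine (Finset.sum_nonneg fun z _ => hG.1 x z).lt_of_ne fun hx => ?_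
  have hout : ∀ z, μ x z = 0 := fun z =>
    (Finset.sum_eq_zero_iff_of_nonneg fun z _ => hG.1 x z).1 hx.symm z (Finset.mem_univ z)
  -- without out-edges `x` reaches nothing else, so `V = {x}` and stationarity forces `m x = 0`
  have hall : ∀ y, y = x := fun y => by
    obtain ⟨n, p, hp0, hpn, hp⟩ := hG.2.2 x y
    rcases n.eq_zero_or_pos with rfl | hn
    · exact hpn.symm.trans hp0
    · exact absurd (hp 0 hn) (by simp [hp0, hout])
  have hμ : ∀ a b, μ a b = 0 := fun a b => by rw [hall a, hall b]; exact hG.2.1 x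
  have := hP.2.2 x
  simp only [ker, hμ, zero_div, mul_zero, Finset.sum_const_zero] at this
  exact (hP.1 x).ne' this

lemma ker_nonneg (hG : IsGraph μ) (x y : V) : 0 ≤ ker μ x y :=
  div_nonneg (hG.1 x y) (Finset.sum_nonneg fun z _ => hG.1 x z)

lemma meanKer_nonneg (hG : IsGraph μ) (hm : ∀ x, 0 < m x) (x y : V) : 0 ≤ meanKer μ m x y := by
  have := ker_nonneg hG x y
  have := ker_nonneg hG y x
  have := hm x
  have := hm y
  unfold meanKer
  positivity

lemma sum_meanKer (hG : IsGraph μ) (hP : IsPerron μ m) (x : V) : ∑ y, meanKer μ m x y = 1 := by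
  have hker : ∑ y, ker μ x y = 1 := by
    simp only [ker, ← Finset.sum_div]
    exact div_self (sum_pos_of_isPerron hG hP x).ne'
  have hdual : ∑ y, m y * ker μ y x / m x = 1 := by
    rw [← Finset.sum_div, ← hP.2.2 x, div_self (hP.1 x).ne']
  simp only [meanKer, ← Finset.sum_div, Finset.sum_add_distrib, hker, hdual]
  norm_num

lemma mul_meanKer_comm (hm : ∀ x, 0 < m x) (x y : V) :
    m x * meanKer μ m x y = m y * meanKer μ m y x := by
  unfold meanKer
  field_simp [(hm x).ne', (hm y).ne']
  ring

lemma meanKer_eq_zero {x y : V} (hxy : μ x y = 0) (hyx : μ y x = 0) : meanKer μ m x y = 0 := by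
  simp [meanKer, ker, hxy, hyx]

end Kernel

section Laplacian

variable {V : Type*} [Fintype V] [DecidableEq V] {μ : V → V → ℝ} {m : V → ℝ}

lemma lap_apply (f : V → ℝ) (x : V) : lap μ m f x = f x - ∑ y, meanKer μ m x y * f y := by
  rw [lap, lapMat, Matrix.sub_mulVec, Matrix.one_mulVec]
  simp [Matrix.mulVec, dotProduct]

lemma lap_sub (f g : V → ℝ) : lap μ m (f - g) = lap μ m f - lap μ m g :=
  Matrix.mulVec_sub _ _ _

lemma lap_eq_sum (hG : IsGraph μ) (hP : IsPerron μ m) (f : V → ℝ) (x : V) :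
    lap μ m f x = ∑ y, meanKer μ m x y * (f x - f y) := by
  simp only [lap_apply, mul_sub, Finset.sum_sub_distrib, ← Finset.sum_mul, sum_meanKer hG hP,
    one_mul]

lemma sum_lap_mul (hG : IsGraph μ) (hP : IsPerron μ m) (f g : V → ℝ) :
    ∑ x, lap μ m f x * (g x * m x)
      = (∑ x, ∑ y, m x * meanKer μ m x y * ((f x - f y) * (g x - g y))) / 2 := by
  set w := fun x y => m x * meanKer μ m x y
  have hw : ∀ x y, w x y = w y x := mul_meanKer_comm hP.1
  have hleft : ∑ x, lap μ m f x * (g x * m x) = ∑ x, ∑ y, w x y * ((f x - f y) * g x) := by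
    refine Finset.sum_congr rfl fun x _ => ?_
    rw [lap_eq_sum hG hP, Finset.sum_mul]
    exact Finset.sum_congr rfl fun y _ => by simp only [w]; ring
  have hright : ∑ x, lap μ m f x * (g x * m x) = ∑ x, ∑ y, w x y * ((f y - f x) * g y) := by
    rw [hleft, Finset.sum_comm]
    exact Finset.sum_congr rfl fun x _ => Finset.sum_congr rfl fun y _ => by rw [hw]
  have hsum : ∑ x, ∑ y, w x y * ((f x - f y) * (g x - g y))
      = ∑ x, ∑ y, w x y * ((f x - f y) * g x) + ∑ x, ∑ y, w x y * ((f y - f x) * g y) := by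
    simp only [← Finset.sum_add_distrib]
    exact Finset.sum_congr rfl fun x _ => Finset.sum_congr rfl fun y _ => by ring
  linarith

end Laplacian

section Curvature

variable {V : Type*} [Fintype V] [DecidableEq V] {μ : V → V → ℝ} {m : V → ℝ}

lemma abs_lap_le (hG : IsGraph μ) (hP : IsPerron μ m) {D : ℝ} (hD : ∀ a b, gdist μ a b ≤ D)
    {g : V → ℝ} (hg : ∀ a b, g b - g a ≤ gdist μ a b) (z : V) : |lap μ m g z| ≤ D := by
  rw [lap_eq_sum hG hP]
  calc |∑ w, meanKer μ m z w * (g z - g w)| ≤ ∑ w, meanKer μ m z w * D := by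
        refine (Finset.abs_sum_le_sum_abs _ _).trans (Finset.sum_le_sum fun w _ => ?_)
        rw [abs_mul, abs_of_nonneg (meanKer_nonneg hG hP.1 z w)]
        refine mul_le_mul_of_nonneg_left (abs_le.2 ⟨?_, ?_⟩) (meanKer_nonneg hG hP.1 z w)
        · linarith [hg z w, hD z w]
        · linarith [hg w z, hD w z]
    _ = D := by rw [← Finset.sum_mul, sum_meanKer hG hP, one_mul]

lemma mul_gdist_le_lap_sub_lap (hG : IsGraph μ) (hP : IsPerron μ m) {K : ℝ} {x y : V}
    (hxy : x ≠ y) (hK : K ≤ ricci μ m x y) {h : V → ℝ}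
    (hh : ∀ a b, h b - h a ≤ gdist μ a b) (hgrad : h y - h x = gdist μ x y) :
    K * gdist μ x y ≤ lap μ m h y - lap μ m h x := by
  have hd := gdist_pos hG hxy
  obtain ⟨D, hD⟩ := Finite.bddAbove_range (Function.uncurry (gdist μ))
  have hD' : ∀ a b, gdist μ a b ≤ D := fun a b => hD ⟨(a, b), rfl⟩
  have hbdd : BddBelow {r : ℝ | ∃ g : V → ℝ, (∀ a b, g b - g a ≤ gdist μ a b) ∧
      (g y - g x) / gdist μ x y = 1 ∧ r = (lap μ m g y - lap μ m g x) / gdist μ x y} := by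
    refine ⟨-(2 * D) / gdist μ x y, ?_⟩
    rintro r ⟨g, hg, -, rfl⟩
    have hy := abs_le.1 (abs_lap_le hG hP hD' hg y)
    have hx := abs_le.1 (abs_lap_le hG hP hD' hg x)
    exact div_le_div_of_nonneg_right (by linarith) hd.le
  have hmem := csInf_le hbdd ⟨h, hh, by rw [hgrad, div_self hd.ne'], rfl⟩
  rw [← le_div_iff₀ hd]
  exact hK.trans hmem

lemma lazy_step_sub_le (hG : IsGraph μ) (hP : IsPerron μ m) {K ε : ℝ}
    (hcurv : ∀ x y : V, x ≠ y → K ≤ ricci μ m x y) (hε0 : 0 ≤ ε) (hε : ε ≤ 1 / 2)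
    {f : V → ℝ} (hf : ∀ a b, f b - f a ≤ gdist μ a b) (x y : V) :
    (f y - ε * lap μ m f y) - (f x - ε * lap μ m f x) ≤ (1 - ε * K) * gdist μ x y := by
  rcases eq_or_ne x y with rfl | hxy
  · simp [gdist_self]
  obtain ⟨h, hh, hhx, hhy, hhf⟩ := exists_lipschitz_bump gdist_self (gdist_triangle hG) hf x y
  set s := gdist μ x y - (f y - f x)
  have hs : 0 ≤ s := by linarith [hf x y]
  have hK := mul_gdist_le_lap_sub_lap hG hP hxy (hcurv x y hxy) hh (by rw [hhx, hhy]; ring)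
  have hcy : lap μ m (h - f) y ≤ s := by
    have := Finset.sum_nonneg fun z (_ : z ∈ Finset.univ) =>
      mul_nonneg (meanKer_nonneg hG hP.1 y z) (hhf z).1
    rw [lap_apply, Pi.sub_apply, hhy]
    simp only [Pi.sub_apply] at this ⊢
    linarith
  have hcx : -s ≤ lap μ m (h - f) x := by
    have : ∑ z, meanKer μ m x z * (h z - f z) ≤ s := by
      calc ∑ z, meanKer μ m x z * (h z - f z) ≤ ∑ z, meanKer μ m x z * s :=
            Finset.sum_le_sum fun z _ =>
              mul_le_mul_of_nonneg_left (hhf z).2 (meanKer_nonneg hG hP.1 x z)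
        _ = s := by rw [← Finset.sum_mul, sum_meanKer hG hP, one_mul]
    rw [lap_apply, Pi.sub_apply, hhx]
    simp only [Pi.sub_apply]
    linarith
  rw [lap_sub, Pi.sub_apply] at hcy hcx
  have hεK := mul_le_mul_of_nonneg_left
    (show K * gdist μ x y - 2 * s ≤ lap μ m f y - lap μ m f x by linarith) hε0
  nlinarith

end Curvature

section DualObjective

variable {V : Type*} [Fintype V] [DecidableEq V] {μ : V → V → ℝ} {m : V → ℝ}

lemma sum_lap_mul_sub_le (hG : IsGraph μ) (hP : IsPerron μ m) {Λ : ℝ}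
    (hD : ∀ x y : V, (0 < μ x y ∨ 0 < μ y x) → max (gdist μ x y) (gdist μ y x) ≤ Λ)
    {f : V → ℝ} (hf : ∀ a b, f b - f a ≤ gdist μ a b) (ρ : V → ℝ) :
    ∑ x, lap μ m f x * (ρ x * m x) - ∑ x, lap μ m f x * m x
      ≤ Λ / 2 * ∑ x, ∑ y, |ρ y - ρ x| * (m x * meanKer μ m x y) := by
  have hconst := sum_lap_mul hG hP f 1
  simp only [Pi.one_apply, one_mul, sub_self, mul_zero, Finset.sum_const_zero, zero_div]
    at hconst
  rw [sum_lap_mul hG hP, hconst, sub_zero, Finset.mul_sum, div_le_iff₀ two_pos, Finset.sum_mul]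
  refine Finset.sum_le_sum fun x _ => ?_
  rw [Finset.mul_sum, Finset.sum_mul]
  refine Finset.sum_le_sum fun y _ => ?_
  by_cases hxy : 0 < μ x y ∨ 0 < μ y x
  · have hfxy : |f x - f y| ≤ Λ := abs_le.2
      ⟨by linarith [hf x y, le_max_left (gdist μ x y) (gdist μ y x), hD x y hxy],
        by linarith [hf y x, le_max_right (gdist μ x y) (gdist μ y x), hD x y hxy]⟩
    have hprod : (f x - f y) * (ρ x - ρ y) ≤ Λ * |ρ y - ρ x| := by
      rw [abs_sub_comm]
      calc (f x - f y) * (ρ x - ρ y) ≤ |f x - f y| * |ρ x - ρ y| := by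
            rw [← abs_mul]; exact le_abs_self _
        _ ≤ Λ * |ρ x - ρ y| := mul_le_mul_of_nonneg_right hfxy (abs_nonneg _)
    have hw := mul_nonneg (hP.1 x).le (meanKer_nonneg hG hP.1 x y)
    nlinarith
  · rw [not_or, not_lt, not_lt] at hxy
    rw [meanKer_eq_zero (le_antisymm hxy.1 (hG.1 x y)) (le_antisymm hxy.2 (hG.1 y x))]
    simp

lemma sum_mul_sub_sum_mul_le (hG : IsGraph μ) (hP : IsPerron μ m) {K Λ : ℝ} (hK : 0 < K)
    (hcurv : ∀ x y : V, x ≠ y → K ≤ ricci μ m x y)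
    (hD : ∀ x y : V, (0 < μ x y ∨ 0 < μ y x) → max (gdist μ x y) (gdist μ y x) ≤ Λ)
    {ρ : V → ℝ} (hρ : ∀ x, 0 ≤ ρ x) (hρm : ∑ x, ρ x * m x = 1)
    {f : V → ℝ} (hf : ∀ a b, f b - f a ≤ gdist μ a b) :
    ∑ y, f y * (ρ y * m y) - ∑ x, f x * m x
      ≤ Λ / (2 * K) * ∑ x, ∑ y, |ρ y - ρ x| * (m x * meanKer μ m x y) := by
  set T := ∑ x, ∑ y, |ρ y - ρ x| * (m x * meanKer μ m x y)
  set S : (V → ℝ) → ℝ := fun f => ∑ y, f y * (ρ y * m y) - ∑ x, f x * m x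
  set Lip := {f : V → ℝ | ∀ a b, f b - f a ≤ gdist μ a b}
  have hbdd : BddAbove (S '' Lip) := by
    refine ⟨∑ x, ∑ y, gdist μ x y * (m x * (ρ y * m y)), ?_⟩
    rintro _ ⟨g, hg, rfl⟩
    exact sum_mul_sub_sum_mul_le_cost (isCoupling_mul (fun x => (hP.1 x).le)
      (fun x => mul_nonneg (hρ x) (hP.1 x).le) hP.2.1 hρm) hg
  set ε : ℝ := 1 / (2 * (K + 1))
  have hε0 : 0 < ε := by positivity
  have hε : ε ≤ 1 / 2 := by
    rw [div_le_div_iff₀ (by positivity) two_pos]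
    linarith
  have hεK : ε * K < 1 := by
    rw [div_mul_eq_mul_div, one_mul, div_lt_one (by positivity)]
    linarith
  have hc : 0 < 1 - ε * K := by linarith
  have hstep : ∀ g ∈ Lip, ∃ g' ∈ Lip, S g ≤ (1 - ε * K) * S g' + ε * (Λ / 2 * T) := by
    intro g hg
    refine ⟨fun z => (g z - ε * lap μ m g z) / (1 - ε * K), fun a b => ?_, ?_⟩
    · rw [← sub_div, div_le_iff₀ hc]
      exact (lazy_step_sub_le hG hP hcurv hε0.le hε hg a b).trans_eq (mul_comm _ _)
    · have hSg : S g = (1 - ε * K) * S (fun z => (g z - ε * lap μ m g z) / (1 - ε * K))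
          + ε * (∑ x, lap μ m g x * (ρ x * m x) - ∑ x, lap μ m g x * m x) := by
        simp only [S, div_mul_eq_mul_div, ← Finset.sum_div, mul_sub, ← sub_div,
          mul_div_cancel₀ _ hc.ne', sub_mul, Finset.sum_sub_distrib, mul_assoc, ← Finset.mul_sum]
        ring
      rw [hSg]
      gcongr
      exact sum_lap_mul_sub_le hG hP hD hg ρ
  calc S f ≤ ε * (Λ / 2 * T) / (1 - (1 - ε * K)) :=
        le_div_of_forall_exists_le_mul_add ⟨0, fun a b => by simp [gdist_nonneg]⟩ hbdd hc.le
          (by nlinarith) hstep hf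
    _ = Λ / (2 * K) * T := by
        field_simp
        ring

end DualObjective

theorem wasserstein_density_bound_general {V : Type*} [Fintype V] [DecidableEq V]
    (μ : V → V → ℝ) (m : V → ℝ) (K Λ : ℝ)
    (hG : IsGraph μ) (hP : IsPerron μ m) (hK : 0 < K)
    (hcurv : ∀ x y : V, x ≠ y → K ≤ ricci μ m x y)
    (hD : ∀ x y : V, (0 < μ x y ∨ 0 < μ y x) → max (gdist μ x y) (gdist μ y x) ≤ Λ) :
    ∀ ρ : V → ℝ, (∀ x, 0 ≤ ρ x) → ∑ x, ρ x * m x = 1 →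
      wass (gdist μ) m (fun x => ρ x * m x)
        ≤ (Λ / (2 * K)) * ∑ x, ∑ y, |ρ y - ρ x| * (m x * meanKer μ m x y) := by
  intro ρ hρ hρm
  exact wass_le_of_forall_lipschitz gdist_nonneg gdist_self (gdist_triangle hG)
    (fun x => (hP.1 x).le) (fun x => mul_nonneg (hρ x) (hP.1 x).le) hP.2.1 hρm
    fun f hf => sum_mul_sub_sum_mul_le hG hP hK hcurv hD hρ hρm hf

/-- Lemma 5.1: under a positive Ricci curvature bound and bounded jumps, the Wasserstein
distance from the Perron measure to `ρ·m` is controlled by the total variation of `ρ`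
along edges. -/
theorem wasserstein_density_bound {V : Type*} [Fintype V] [DecidableEq V] [Nonempty V]
    (μ : V → V → ℝ) (m : V → ℝ) (K Λ : ℝ)
    (hG : IsGraph μ) (hP : IsPerron μ m) (hK : 0 < K)
    (hcurv : ∀ x y : V, x ≠ y → K ≤ ricci μ m x y) (hΛ : 1 ≤ Λ)
    (hD : ∀ x y : V, (0 < μ x y ∨ 0 < μ y x) → max (gdist μ x y) (gdist μ y x) ≤ Λ) :
    ∀ ρ : V → ℝ, (∀ x, 0 ≤ ρ x) → ∑ x, ρ x * m x = 1 →
      wass (gdist μ) m (fun x => ρ x * m x)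
        ≤ (Λ / (2 * K)) * ∑ x, ∑ y, |ρ y - ρ x| * (m x * meanKer μ m x y) :=
  wasserstein_density_bound_general μ m K Λ hG hP hK hcurv hD

end Chung
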